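/- arXiv:1912.07081 — 4 statements merged into one kernel-verified Lean document; each statement's English description precedes it below -/
import Mathlib

section
/- Let g ≥ 1 and N ≥ 2 be integers. Then the set of g × g real matrices of determinant 1 all of whose entries lie in ℤ[1/N] is dense in the set of all g × g real matrices of determinant 1 (with the topology induced from the space of g × g real matrices). -/
open Matrix

/-!
Every element of `SL_n(K)` is a product of transvections `t_ij(c) = 1 + c E_ij` and of
diagonal matrices `diag(…, a, …, a⁻¹, …)`, and the latter are products of six transvections.
The topological closure of the monoid `SL_n(R)` of a dense subring `R ⊆ K` is a closed monoid
containing every `t_ij(c)`, as `c` is a limit of elements of `R`; hence it contains `SL_n(K)`.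
Finally `ℤ[1/N]` is dense in `ℝ` because it contains the elements `N⁻ᵏ → 0`.
-/

def zInvN (K : Type*) [Field K] (N : ℕ) (hN : (N : K) ≠ 0) : Subring K where
  carrier := {x | ∃ (m : ℤ) (k : ℕ), x = (m : K) / (N : K) ^ k}
  zero_mem' := ⟨0, 0, by simp⟩
  one_mem' := ⟨1, 0, by simp⟩
  add_mem' := by
    rintro _ _ ⟨m, k, rfl⟩ ⟨m', k', rfl⟩
    refine ⟨m * N ^ k' + m' * N ^ k, k + k', ?_⟩
    field_simp
    push_cast
    ring
  mul_mem' := by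
    rintro _ _ ⟨m, k, rfl⟩ ⟨m', k', rfl⟩
    exact ⟨m * m', k + k', by push_cast; ring⟩
  neg_mem' := by
    rintro _ ⟨m, k, rfl⟩
    exact ⟨-m, k, by push_cast; ring⟩

theorem dense_zInvN {K : Type*} [Field K] [LinearOrder K] [IsStrictOrderedRing K] [Archimedean K]
    [TopologicalSpace K] [OrderTopology K] {N : ℕ} (hN : 1 < N) :
    Dense (zInvN K N (Nat.cast_ne_zero.2 (by omega)) : Set K) := by
  have hN0 : (N : K) ≠ 0 := Nat.cast_ne_zero.2 (by omega)
  refine (zInvN K N hN0).toAddSubgroup.dense_of_not_isolated_zero fun ε hε => ?_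
  obtain ⟨k, hk⟩ := exists_pow_lt_of_lt_one hε (inv_lt_one_of_one_lt₀ (Nat.one_lt_cast.2 hN))
  exact ⟨(N : K)⁻¹ ^ k, ⟨1, k, by simp⟩, by positivity, hk⟩

namespace Matrix.SpecialLinearGroup

variable {ι K : Type*} [Fintype ι] [DecidableEq ι] [Field K]

/-- The two bracketed triple products are the Weyl elements `w(a)` and `w(-1)`, where
`w(a) = t_ij(a) t_ji(-a⁻¹) t_ij(a)` is `a E_ij - a⁻¹ E_ji` on the `{i, j}` block and `1`
elsewhere. -/
theorem diag2n_eq_transvection_mul {i j : ι} (hij : i ≠ j) (a : K) (ha : a ≠ 0) :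
    diag2n hij a ha = transvection hij a * transvection hij.symm (-a⁻¹) * transvection hij a *
      (transvection hij (-1) * transvection hij.symm 1 * transvection hij (-1)) := by
  ext r s
  simp only [coe_mul, transvection_coe, diag2n_coe, add_mul, mul_add, one_mul, mul_one,
    single_mul_single_same, single_mul_single_of_ne _ _ _ _ hij,
    single_mul_single_of_ne _ _ _ _ hij.symm]
  simp only [Matrix.add_apply, Matrix.zero_apply, one_apply, single_apply, diagonal_apply]
  rcases eq_or_ne r i with rfl | hri <;> rcases eq_or_ne s r with rfl | hsr <;>
    simp [*, Ne.symm] <;> grind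

end Matrix.SpecialLinearGroup

theorem continuous_transvection {ι K : Type*} [DecidableEq ι] [CommRing K] [TopologicalSpace K]
    [IsTopologicalRing K] (i j : ι) : Continuous (transvection i j : K → Matrix ι ι K) := by
  refine continuous_matrix fun a b => ?_
  simp only [transvection, Matrix.add_apply, single_apply]
  split_ifs <;> fun_prop

def specialMatrixSubmonoid (ι : Type*) [Fintype ι] [DecidableEq ι] {K : Type*} [CommRing K]
    (R : Subring K) : Submonoid (Matrix ι ι K) where
  carrier := {A | A.det = 1 ∧ ∀ i j, A i j ∈ R}
  one_mem' := ⟨det_one, fun i j => by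
    rw [one_apply]
    split_ifs
    exacts [R.one_mem, R.zero_mem]⟩
  mul_mem' := fun hA hB => ⟨by rw [det_mul, hA.1, hB.1, one_mul],
    fun i j => R.sum_mem fun k _ => R.mul_mem (hA.2 i k) (hB.2 k j)⟩

section SpecialMatrices

variable {ι K : Type*} [Fintype ι] [DecidableEq ι]

theorem transvection_mem_specialMatrixSubmonoid [CommRing K] {R : Subring K} {i j : ι}
    (hij : i ≠ j) {c : K} (hc : c ∈ R) :
    transvection i j c ∈ specialMatrixSubmonoid ι R := by
  refine ⟨det_transvection_of_ne i j hij c, fun a b => R.add_mem ?_ ?_⟩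
  · rw [one_apply]
    split_ifs
    exacts [R.one_mem, R.zero_mem]
  · rw [single_apply]
    split_ifs
    exacts [hc, R.zero_mem]

variable [Field K] [TopologicalSpace K] [IsTopologicalRing K] {R : Subring K}

theorem transvection_mem_closure_specialMatrixSubmonoid (hR : Dense (R : Set K)) {i j : ι}
    (hij : i ≠ j) (c : K) :
    transvection i j c ∈ (specialMatrixSubmonoid ι R).topologicalClosure :=
  map_mem_closure (continuous_transvection i j) (hR c)
    fun _ hq => transvection_mem_specialMatrixSubmonoid hij hq

theorem setOf_det_eq_one_subset_closure_specialMatrixSubmonoid (hR : Dense (R : Set K)) :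
    {A : Matrix ι ι K | A.det = 1} ⊆
      closure (specialMatrixSubmonoid ι R : Set (Matrix ι ι K)) := by
  intro A hA
  set C := (specialMatrixSubmonoid ι R).topologicalClosure
  have ht {i j : ι} (hij : i ≠ j) (c : K) : transvection i j c ∈ C :=
    transvection_mem_closure_specialMatrixSubmonoid hR hij c
  set M : SpecialLinearGroup ι K := ⟨A, hA⟩
  change (M : Matrix ι ι K) ∈ C
  rcases subsingleton_or_nontrivial ι with _ | _
  · rw [Subsingleton.elim M 1]
    exact C.one_mem
  refine SpecialLinearGroup.diagonal_transvection_induction' (fun M => (M : Matrix ι ι K) ∈ C)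
    _ (fun i j hij a ha => ?_) (fun _ _ hij c => ht hij c) (fun _ _ hA hB => C.mul_mem hA hB)
  rw [SpecialLinearGroup.diag2n_eq_transvection_mul hij a ha]
  exact C.mul_mem (C.mul_mem (C.mul_mem (ht hij _) (ht hij.symm _)) (ht hij _))
    (C.mul_mem (C.mul_mem (ht hij _) (ht hij.symm _)) (ht hij _))

end SpecialMatrices

theorem slZinvN_dense_in_slR_general (g N : ℕ) (hN : 2 ≤ N) :
    {A : Matrix (Fin g) (Fin g) ℝ | A.det = 1} ⊆
      closure {A : Matrix (Fin g) (Fin g) ℝ | A.det = 1 ∧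
        ∀ i j, ∃ (m : ℤ) (k : ℕ), A i j = (m : ℝ) / (N : ℝ) ^ k} :=
  setOf_det_eq_one_subset_closure_specialMatrixSubmonoid (dense_zInvN hN)

/-- `SL_g(ℤ[1/N])` is dense in `SL_g(ℝ)`. -/
theorem slZinvN_dense_in_slR (g N : ℕ) (hg : 1 ≤ g) (hN : 2 ≤ N) :
    {A : Matrix (Fin g) (Fin g) ℝ | A.det = 1} ⊆
      closure {A : Matrix (Fin g) (Fin g) ℝ | A.det = 1 ∧
        ∀ i j, ∃ (m : ℤ) (k : ℕ), A i j = (m : ℝ) / (N : ℝ) ^ k} :=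
  slZinvN_dense_in_slR_general g N hN
end

section
/- Let g ≥ 1 and N ≥ 2 be integers. Then the set of g × g real matrices of the form r • (G * Gᵀ), where r is a positive real number and G is a g × g real matrix with determinant 1 all of whose entries lie in ℤ[1/N], is dense in the set of g × g real matrices that are symmetric and positive definite (with the topology induced from the space of g × g real matrices). -/
open Matrix

/-!
Write `A = r • (G * Gᵀ)` with `r > 0` and `det G = 1` by taking `G` to be the square root of the
rescaled matrix `A / (det A)^(1/g)`. It then suffices that `SL_g(ℤ[1/N])` is dense in `SL_g(ℝ)`.
Its closure is a closed submonoid of the matrices which contains every real transvection, since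
`ℤ[1/N]` is dense in `ℝ`; and transvections generate `SL_g(ℝ)` as a monoid, the diagonal
matrices `diag(a, a⁻¹)` being products of six of them.
-/

namespace Subring

variable {K : Type*} [Field K]

def zAdjoinInv (N : ℕ) (hN : (N : K) ≠ 0) : Subring K where
  carrier := {x | ∃ (m : ℤ) (k : ℕ), x = m / (N : K) ^ k}
  zero_mem' := ⟨0, 0, by simp⟩
  one_mem' := ⟨1, 0, by simp⟩
  add_mem' := by
    rintro _ _ ⟨m, k, rfl⟩ ⟨m', k', rfl⟩
    refine ⟨m * N ^ k' + N ^ k * m', k + k', ?_⟩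
    rw [div_add_div _ _ (pow_ne_zero k hN) (pow_ne_zero k' hN), pow_add]
    push_cast
    ring
  mul_mem' := by
    rintro _ _ ⟨m, k, rfl⟩ ⟨m', k', rfl⟩
    exact ⟨m * m', k + k', by push_cast; rw [pow_add, div_mul_div_comm]⟩
  neg_mem' := by
    rintro _ ⟨m, k, rfl⟩
    exact ⟨-m, k, by push_cast; ring⟩

theorem dense_zAdjoinInv {N : ℕ} (hN : 1 < N) :
    Dense (zAdjoinInv (K := ℝ) N (Nat.cast_ne_zero.2 (by omega)) : Set ℝ) := by
  have hN' : (1 : ℝ) < N := by exact_mod_cast hN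
  refine AddSubgroup.dense_of_not_isolated_zero
    (zAdjoinInv N (zero_lt_one.trans hN').ne').toAddSubgroup fun ε hε => ?_
  obtain ⟨k, hk⟩ := exists_pow_lt_of_lt_one hε (inv_lt_one_of_one_lt₀ hN')
  exact ⟨1 / (N : ℝ) ^ k, ⟨1, k, by simp⟩, by positivity, by rwa [one_div, ← inv_pow]⟩

end Subring

namespace Matrix

variable {n : Type*} [Fintype n] [DecidableEq n]

section Submonoid

variable {R : Type*} [CommRing R]

def specialLinearSubmonoid (S : Subring R) : Submonoid (Matrix n n R) where
  carrier := {G | G.det = 1 ∧ ∀ i j, G i j ∈ S}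
  mul_mem' {A B} hA hB := by
    refine ⟨by rw [det_mul, hA.1, hB.1, one_mul], fun i j => ?_⟩
    rw [mul_apply]
    exact S.sum_mem fun k _ => S.mul_mem (hA.2 i k) (hB.2 k j)
  one_mem' := by
    refine ⟨det_one, fun i j => ?_⟩
    rw [one_apply]
    split_ifs
    exacts [S.one_mem, S.zero_mem]

variable {S : Subring R} {i j : n}

theorem transvection_mem_specialLinearSubmonoid (hij : i ≠ j) {c : R} (hc : c ∈ S) :
    transvection i j c ∈ specialLinearSubmonoid S := by
  refine ⟨det_transvection_of_ne i j hij c, fun k l => ?_⟩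
  rw [transvection, add_apply, one_apply, single_apply]
  refine S.add_mem ?_ ?_ <;> split_ifs
  exacts [S.one_mem, S.zero_mem, hc, S.zero_mem]

theorem transvection_mem_topologicalClosure [TopologicalSpace R] [IsTopologicalRing R]
    (hS : Dense (S : Set R)) (hij : i ≠ j) (c : R) :
    transvection i j c ∈ (specialLinearSubmonoid S).topologicalClosure := by
  have hcont : Continuous fun c : R => transvection i j c := by
    refine continuous_matrix fun k l => ?_
    simp only [transvection, add_apply, single_apply]
    split_ifs <;> fun_prop
  exact map_mem_closure hcont (hS c) fun c hc => transvection_mem_specialLinearSubmonoid hij hc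

end Submonoid

variable {F : Type*} [Field F]

theorem diagonal_pair_eq_transvection_prod {i j : n} (hij : i ≠ j) {a : F} (ha : a ≠ 0) :
    diagonal (fun k => if k = i then a else if k = j then a⁻¹ else 1) =
      transvection i j a * transvection j i (-a⁻¹) * transvection i j a *
        transvection i j (-1) * transvection j i 1 * transvection i j (-1) := by
  -- With a trailing `* 1` every factor acts as a row operation (`transvection_mul_apply_*`).
  rw [← mul_one (_ * transvection i j (-1))]
  simp only [mul_assoc]
  ext k l
  rcases eq_or_ne k i with rfl | hki
  · simp [one_apply, diagonal_apply, hij, hij.symm, -mul_one, -Matrix.mul_one]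
    split_ifs <;> grind
  rcases eq_or_ne k j with rfl | hkj
  · simp [one_apply, diagonal_apply, hij, hki, -mul_one, -Matrix.mul_one]
    split_ifs <;> grind
  · simp [one_apply, diagonal_apply, hki, hkj, -mul_one, -Matrix.mul_one]

theorem mem_closure_range_transvection_of_det_eq_one {M : Matrix n n F} (hM : M.det = 1) :
    M ∈ Submonoid.closure (Set.range (TransvectionStruct.toMatrix (n := n) (R := F))) := by
  set T := Submonoid.closure (Set.range (TransvectionStruct.toMatrix (n := n) (R := F)))
  have htransvec {i j : n} (hij : i ≠ j) (c : F) : transvection i j c ∈ T :=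
    Submonoid.subset_closure ⟨⟨i, j, hij, c⟩, rfl⟩
  rcases subsingleton_or_nontrivial n with hn | hn
  · suffices M = 1 from this ▸ T.one_mem
    ext i j
    obtain rfl := Subsingleton.elim i j
    let : Unique n := uniqueOfSubsingleton i
    simpa [det_unique, Subsingleton.elim default i] using hM
  refine SpecialLinearGroup.diagonal_transvection_induction' (fun A => (A : Matrix n n F) ∈ T)
    ⟨M, hM⟩ (fun i j hij c hc => ?_) (fun i j hij c => htransvec hij c)
    (fun A B hA hB => T.mul_mem hA hB)
  rw [SpecialLinearGroup.diag2n_coe, diagonal_pair_eq_transvection_prod hij hc]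
  repeat' apply T.mul_mem
  all_goals first | exact htransvec hij _ | exact htransvec hij.symm _

theorem mem_topologicalClosure_specialLinearSubmonoid [TopologicalSpace F] [IsTopologicalRing F]
    {S : Subring F} (hS : Dense (S : Set F)) {M : Matrix n n F} (hM : M.det = 1) :
    M ∈ (specialLinearSubmonoid S).topologicalClosure :=
  Submonoid.closure_le.2
    (by rintro _ ⟨t, rfl⟩; exact transvection_mem_topologicalClosure hS t.hij t.c)
    (mem_closure_range_transvection_of_det_eq_one hM)

open scoped MatrixOrder in
theorem PosDef.exists_eq_mul_transpose_of_det_eq_one {A : Matrix n n ℝ} (hA : A.PosDef)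
    (hdet : A.det = 1) : ∃ G : Matrix n n ℝ, G.det = 1 ∧ A = G * Gᵀ := by
  have hsqrt : (CFC.sqrt A).PosSemidef := (CFC.sqrt_nonneg A).posSemidef
  refine ⟨CFC.sqrt A, by simp [hA.posSemidef.det_sqrt, hdet], ?_⟩
  rw [← conjTranspose_eq_transpose_of_trivial, hsqrt.isHermitian.eq,
    CFC.sqrt_mul_sqrt_self A hA.posSemidef.nonneg]

theorem PosDef.exists_eq_smul_mul_transpose [Nonempty n] {A : Matrix n n ℝ} (hA : A.PosDef) :
    ∃ r > (0 : ℝ), ∃ G : Matrix n n ℝ, G.det = 1 ∧ A = r • (G * Gᵀ) := by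
  set r := A.det ^ (Fintype.card n : ℝ)⁻¹
  have hr : 0 < r := Real.rpow_pos_of_pos hA.det_pos _
  have hdet : (r⁻¹ • A).det = 1 := by
    rw [det_smul, inv_pow, Real.rpow_inv_natCast_pow hA.det_pos.le Fintype.card_ne_zero,
      inv_mul_cancel₀ hA.det_pos.ne']
  obtain ⟨G, hG, hAG⟩ := (hA.smul (inv_pos.2 hr)).exists_eq_mul_transpose_of_det_eq_one hdet
  exact ⟨r, hr, G, hG, by rw [← hAG, smul_inv_smul₀ hr.ne']⟩

end Matrix

/-- The set of matrices `r • (G * Gᵀ)` with `r > 0` and `G ∈ SL_g(ℤ[1/N])` is dense in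
the set of real symmetric positive definite `g × g` matrices. -/
theorem rGGt_dense_in_posdef (g N : ℕ) (hg : 1 ≤ g) (hN : 2 ≤ N) :
    {A : Matrix (Fin g) (Fin g) ℝ | A.IsSymm ∧ A.PosDef} ⊆
      closure {B : Matrix (Fin g) (Fin g) ℝ |
        ∃ (r : ℝ) (G : Matrix (Fin g) (Fin g) ℝ), 0 < r ∧ G.det = 1 ∧
          (∀ i j, ∃ (m : ℤ) (k : ℕ), G i j = (m : ℝ) / (N : ℝ) ^ k) ∧
          B = r • (G * Gᵀ)} := by
  have : Nonempty (Fin g) := ⟨⟨0, hg⟩⟩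
  rintro _ ⟨-, hA⟩
  obtain ⟨r, hr, G, hG, rfl⟩ := hA.exists_eq_smul_mul_transpose
  have hG_mem := mem_topologicalClosure_specialLinearSubmonoid (Subring.dense_zAdjoinInv hN) hG
  exact map_mem_closure (f := fun G => r • (G * Gᵀ))
    ((continuous_id.matrix_mul continuous_id.matrix_transpose).const_smul r) hG_mem
    fun G' hG' => ⟨r, G', hr, hG'.1, hG'.2, rfl⟩
end

section
/- Fix an integer g ≥ 1 and a real number t. Then the set of g × g real matrices Q that are symmetric, positive semidefinite, half-integral, and satisfy tr(Q) ≤ t, is finite. -/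
/-!
Testing positive semidefiniteness on `eᵢ ± eⱼ` gives `2 |Qᵢⱼ| ≤ Qᵢᵢ + Qⱼⱼ ≤ 2 tr Q`, so every
entry of such a `Q` is a half-integer in `[-t, t]`, which leaves finitely many choices.
-/

open Matrix

namespace Matrix.PosSemidef

variable {n R : Type*} [Fintype n]

lemma diag_le_trace [Ring R] [PartialOrder R] [StarRing R] [AddLeftMono R]
    {A : Matrix n n R} (hA : A.PosSemidef) (i : n) : A i i ≤ A.trace :=
  Finset.single_le_sum (fun j _ ↦ hA.diag_nonneg (i := j)) (Finset.mem_univ i)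

variable [CommRing R] [LinearOrder R] [IsStrictOrderedRing R] [StarRing R] [TrivialStar R]

lemma two_mul_abs_apply_le {A : Matrix n n R} (hA : A.PosSemidef) (i j : n) :
    2 * |A i j| ≤ A i i + A j j := by
  classical
  have hsymm : A j i = A i j := by simpa using congrFun (congrFun hA.isHermitian i) j
  have hform : ∀ s : R, 0 ≤ A i i + s * (A i j + A j i) + s * s * A j j := by
    intro s
    have := hA.dotProduct_mulVec_nonneg (Pi.single i 1 + Pi.single j s)
    simp only [star_trivial, mulVec_add, mulVec_single, MulOpposite.op_one, one_smul,
      op_smul_eq_smul, dotProduct_add, add_dotProduct, single_dotProduct, col_apply, one_mul,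
      dotProduct_smul, smul_eq_mul] at this
    linear_combination this
  have h₁ := hform 1
  have h₂ := hform (-1)
  rw [hsymm] at h₁ h₂
  rw [← abs_two, ← abs_mul, abs_le]
  constructor <;> linarith

lemma abs_apply_le_trace {A : Matrix n n R} (hA : A.PosSemidef) (i j : n) :
    |A i j| ≤ A.trace := by
  have := hA.two_mul_abs_apply_le i j
  linarith [hA.diag_le_trace i, hA.diag_le_trace j]

end Matrix.PosSemidef

lemma Real.finite_setOf_abs_le_two_mul_eq_intCast (C : ℝ) :
    {x : ℝ | |x| ≤ C ∧ ∃ m : ℤ, 2 * x = m}.Finite := by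
  refine ((Set.finite_Icc (-⌈2 * C⌉) ⌈2 * C⌉).image fun m : ℤ ↦ (m : ℝ) / 2).subset ?_
  rintro x ⟨hx, m, hm⟩
  refine ⟨m, ?_, by linarith⟩
  have : |(m : ℝ)| ≤ ⌈2 * C⌉ := by
    rw [← hm, abs_mul, abs_two]
    linarith [Int.le_ceil (2 * C)]
  exact abs_le.mp (by exact_mod_cast this)

theorem finite_halfintegral_psd_bounded_trace_general (g : ℕ) (t : ℝ) :
    {Q : Matrix (Fin g) (Fin g) ℝ | Q.IsSymm ∧ Q.PosSemidef ∧
      (∀ i j, ∃ m : ℤ, 2 * Q i j = (m : ℝ)) ∧ (∀ i, ∃ m : ℤ, Q i i = (m : ℝ)) ∧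
      Q.trace ≤ t}.Finite := by
  have hentries := Real.finite_setOf_abs_le_two_mul_eq_intCast t
  refine (Set.Finite.pi fun _ ↦ Set.Finite.pi fun _ ↦ hentries).subset ?_
  rintro Q ⟨-, hQ, hhalf, -, htr⟩ i - j -
  exact ⟨(hQ.abs_apply_le_trace i j).trans htr, hhalf i j⟩

/-- There are finitely many symmetric, positive semidefinite, half-integral `g × g`
matrices with trace at most `t`. -/
theorem finite_halfintegral_psd_bounded_trace (g : ℕ) (hg : 1 ≤ g) (t : ℝ) :
    {Q : Matrix (Fin g) (Fin g) ℝ | Q.IsSymm ∧ Q.PosSemidef ∧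
      (∀ i j, ∃ m : ℤ, 2 * Q i j = (m : ℝ)) ∧ (∀ i, ∃ m : ℤ, Q i i = (m : ℝ)) ∧
      Q.trace ≤ t}.Finite :=
  finite_halfintegral_psd_bounded_trace_general g t
end

section
/- Let g ≥ 1 be an integer, let T be a finite set of g × g real symmetric positive semidefinite matrices, and let ε > 0 be a real number. Then there exists a g × g real symmetric positive definite matrix E such that tr(E·Q₁) ≠ tr(E·Q₂) for all Q₁, Q₂ ∈ T with Q₁ ≠ Q₂, and tr(E·Q) < ε for all Q ∈ T. -/
/-!
A generic linear functional `A ↦ tr(A Q)` already separates the finitely many matrices of `T`,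
but `A` need not be positive definite. Replace it by `E = (s - A)ᵀ (s - A)`: for symmetric `Q`,
`tr(E Q) = s² tr Q - 2 s tr(A Q) + tr(AᵀA Q)`, so distinct `Q` give distinct polynomials in `s`,
and `E` is positive definite as soon as `s` is not an eigenvalue of `A`. All but finitely many
`s` therefore work, and a small positive multiple of `E` pushes all traces below `ε`.
-/

open Matrix Polynomial Filter Topology

theorem Polynomial.exists_eval_ne_zero_and_injOn {R α : Type*} [CommRing R] [IsDomain R]
    [Infinite R] {q : R[X]} (hq : q ≠ 0) {P : α → R[X]} {T : Finset α} (hP : Set.InjOn P T) :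
    ∃ s, q.eval s ≠ 0 ∧ Set.InjOn (fun a => (P a).eval s) T := by
  classical
  set F := q * ∏ p ∈ T.offDiag, (P p.1 - P p.2)
  have hF : F ≠ 0 := mul_ne_zero hq <| Finset.prod_ne_zero_iff.2 fun p hp => by
    obtain ⟨h₁, h₂, hne⟩ := Finset.mem_offDiag.1 hp
    exact sub_ne_zero.2 fun h => hne (hP h₁ h₂ h)
  obtain ⟨s, hs⟩ : ∃ s, F.eval s ≠ 0 := by
    by_contra! h
    exact hF (Polynomial.funext fun r => by simp [h r])
  simp only [F, eval_mul, eval_prod, mul_ne_zero_iff, Finset.prod_ne_zero_iff, eval_sub] at hs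
  refine ⟨s, hs.1, fun a ha b hb hab => by_contra fun hne => ?_⟩
  exact hs.2 (a, b) (Finset.mem_offDiag.2 ⟨ha, hb, hne⟩) (sub_eq_zero.2 hab)

namespace Matrix

theorem exists_injOn_trace_mul {m n K : Type*} [Fintype m] [Fintype n] [Field K] [Infinite K]
    (T : Finset (Matrix m n K)) :
    ∃ A : Matrix n m K, Set.InjOn (fun Q => (A * Q).trace) (T : Set (Matrix m n K)) := by
  classical
  let f (p : T.offDiag) : Module.Dual K (Matrix n m K) :=
    traceLinearMap n K K ∘ₗ mulRightLinearMap n K (p.1.1 - p.1.2)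
  obtain ⟨A, hA⟩ := Module.Dual.exists_forall_ne_zero_of_forall_exists f fun p => by
    obtain ⟨x, hx⟩ := not_forall.1 <| (not_congr ext_iff_trace_mul_left).1
      (Finset.mem_offDiag.1 p.2).2.2
    exact ⟨x, by simpa [f, Matrix.mul_sub, sub_eq_zero] using hx⟩
  refine ⟨A, fun Q₁ h₁ Q₂ h₂ heq => by_contra fun hne => hA ⟨(Q₁, Q₂), ?_⟩ ?_⟩
  · exact Finset.mem_offDiag.2 ⟨h₁, h₂, hne⟩
  · simpa [f, Matrix.mul_sub, sub_eq_zero] using heq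

variable {n R : Type*} [Fintype n] [CommRing R]

theorem trace_transpose_mul_of_isSymm (M Q : Matrix n n R) (hQ : Q.IsSymm) :
    (Mᵀ * Q).trace = (M * Q).trace := by
  rw [← trace_transpose, transpose_mul, transpose_transpose, hQ.eq, trace_mul_comm]

theorem trace_shift_transpose_mul_shift_mul [DecidableEq n] (A Q : Matrix n n R)
    (hQ : Q.IsSymm) (s : R) :
    ((scalar n s - A)ᵀ * (scalar n s - A) * Q).trace
      = (C Q.trace * X ^ 2 - C (2 * (A * Q).trace) * X + C (Aᵀ * A * Q).trace).eval s := by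
  rw [scalar_apply, ← smul_one_eq_diagonal, transpose_sub, transpose_smul, transpose_one]
  simp only [Matrix.sub_mul, Matrix.mul_sub, Matrix.smul_mul, Matrix.mul_smul, Matrix.one_mul,
    Matrix.mul_one, trace_sub, trace_smul, trace_transpose_mul_of_isSymm _ _ hQ, smul_eq_mul,
    eval_add, eval_sub, eval_mul, eval_C, eval_pow, eval_X]
  ring

theorem exists_det_shift_ne_zero_and_injOn_trace {K : Type*} [Field K] [CharZero K]
    [DecidableEq n] {A : Matrix n n K} {T : Finset (Matrix n n K)} (hsym : ∀ Q ∈ T, Q.IsSymm)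
    (hA : Set.InjOn (fun Q => (A * Q).trace) (T : Set (Matrix n n K))) :
    ∃ s, (scalar n s - A).det ≠ 0 ∧
      Set.InjOn (fun Q => ((scalar n s - A)ᵀ * (scalar n s - A) * Q).trace)
        (T : Set (Matrix n n K)) := by
  set P : Matrix n n K → K[X] := fun Q =>
    C Q.trace * X ^ 2 - C (2 * (A * Q).trace) * X + C (Aᵀ * A * Q).trace
  have hP : Set.InjOn P T := fun Q₁ h₁ Q₂ h₂ h => hA h₁ h₂ <| by
    simpa [P, coeff_X, coeff_C] using congrArg (coeff · 1) h
  obtain ⟨s, hdet, hinj⟩ := exists_eval_ne_zero_and_injOn (charpoly_monic A).ne_zero hP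
  refine ⟨s, by rwa [← eval_charpoly], fun Q₁ h₁ Q₂ h₂ h => hinj h₁ h₂ ?_⟩
  simpa only [trace_shift_transpose_mul_shift_mul A _ (hsym _ h₁),
    trace_shift_transpose_mul_shift_mul A _ (hsym _ h₂)] using h

theorem posDef_transpose_mul_self_of_det_ne_zero [DecidableEq n] {M : Matrix n n ℝ}
    (hM : M.det ≠ 0) :
    (Mᵀ * M).PosDef := by
  simpa using PosDef.conjTranspose_mul_self M <|
    mulVec_injective_iff_isUnit.2 <| (isUnit_iff_isUnit_det M).2 hM.isUnit

end Matrix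

theorem exists_pos_forall_mul_lt {ι : Type*} (s : Finset ι) (f : ι → ℝ) {ε : ℝ} (hε : 0 < ε) :
    ∃ δ > 0, ∀ i ∈ s, δ * f i < ε := by
  have : ∀ᶠ δ in 𝓝[>] (0 : ℝ), ∀ i ∈ s, δ * f i < ε :=
    (eventually_all_finset s).2 fun i _ => nhdsWithin_le_nhds <|
      ((continuous_id.mul continuous_const).tendsto' 0 0 (by simp)).eventually (gt_mem_nhds hε)
  exact (this.and self_mem_nhdsWithin).exists.imp fun δ h => ⟨h.2, h.1⟩

theorem exists_posdef_separating_traces_general (g : ℕ)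
    (T : Finset (Matrix (Fin g) (Fin g) ℝ))
    (hsym : ∀ Q ∈ T, Q.IsSymm)
    (ε : ℝ) (hε : 0 < ε) :
    ∃ E : Matrix (Fin g) (Fin g) ℝ, E.IsSymm ∧ E.PosDef ∧
      (∀ Q₁ ∈ T, ∀ Q₂ ∈ T, Q₁ ≠ Q₂ → (E * Q₁).trace ≠ (E * Q₂).trace) ∧
      (∀ Q ∈ T, (E * Q).trace < ε) := by
  obtain ⟨A, hA⟩ := exists_injOn_trace_mul T
  obtain ⟨s, hdet, hinj⟩ := exists_det_shift_ne_zero_and_injOn_trace hsym hA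
  set M := scalar (Fin g) s - A
  obtain ⟨δ, hδ, hδε⟩ := exists_pos_forall_mul_lt T (fun Q => (Mᵀ * M * Q).trace) hε
  have htrace (Q : Matrix (Fin g) (Fin g) ℝ) :
      (δ • (Mᵀ * M) * Q).trace = δ * (Mᵀ * M * Q).trace := by
    rw [smul_mul, trace_smul, smul_eq_mul]
  refine ⟨δ • (Mᵀ * M), (isSymm_transpose_mul_self M).smul δ,
    (posDef_transpose_mul_self_of_det_ne_zero hdet).smul hδ, fun Q₁ h₁ Q₂ h₂ hne h => ?_,
    fun Q hQ => htrace Q ▸ hδε Q hQ⟩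
  rw [htrace, htrace] at h
  exact hne (hinj h₁ h₂ (mul_left_cancel₀ hδ.ne' h))

/-- Given a finite set `T` of real symmetric positive semidefinite matrices and `ε > 0`,
there is a real symmetric positive definite matrix `E` such that the traces `tr(E·Q)` for
`Q ∈ T` are pairwise distinct and all less than `ε`. -/
theorem exists_posdef_separating_traces (g : ℕ) (hg : 1 ≤ g)
    (T : Finset (Matrix (Fin g) (Fin g) ℝ))
    (hsym : ∀ Q ∈ T, Q.IsSymm) (hpsd : ∀ Q ∈ T, Q.PosSemidef)
    (ε : ℝ) (hε : 0 < ε) :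
    ∃ E : Matrix (Fin g) (Fin g) ℝ, E.IsSymm ∧ E.PosDef ∧
      (∀ Q₁ ∈ T, ∀ Q₂ ∈ T, Q₁ ≠ Q₂ → (E * Q₁).trace ≠ (E * Q₂).trace) ∧
      (∀ Q ∈ T, (E * Q).trace < ε) :=
  exists_posdef_separating_traces_general g T hsym ε hε
end
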